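/- arXiv:2503.10786 — 3 statements merged into one kernel-verified Lean document; each statement's English description precedes it below -/
import Mathlib

section
/- Let B, C, D be three non-collinear points of the Euclidean plane ℝ², let O be the circumcenter and r the circumradius of triangle BCD. Let A be a point such that A and D lie strictly on opposite sides of the line through B and C. If dist(A, O) < r (A is strictly inside the circumcircle of BCD), then ∠BAC + ∠BDC > π, where ∠BAC denotes the undirected angle at A between rays AB and AC, valued in [0, π], and similarly for ∠BDC. -/
/-!
Write `u = B - A`, `v = C - A`, `u' = B - D`, `v' = C - D` and `×` for the planar cross product.
Expanding the sine of a sum,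
`sin (∠BAC + ∠BDC) ‖u‖‖v‖‖u'‖‖v'‖ = |u × v| ⟪u', v'⟫ + ⟪u, v⟫ |u' × v'|`.
Since `A` and `D` lie on opposite sides of `BC`, the cross products `u × v` and `u' × v'` have
opposite signs, so up to the sign of `u' × v'` the right-hand side is
`⟪u, v⟫ (u' × v') - ⟪u', v'⟫ (u × v)`. When `B`, `C`, `D` lie on a circle this is the polynomial
`(u' × v') (|AO|² - r²)`, so for `A` inside the circle the sine is negative, and an angle in
`[0, 2π]` with negative sine exceeds `π`.
-/

open Real EuclideanGeometry
open scoped InnerProductSpace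

theorem AffineSubspace.SOppSide.apply_mul_apply_neg {V P : Type*} [AddCommGroup V] [Module ℝ V]
    [AddTorsor V P] {s : AffineSubspace ℝ P} {x y : P} (h : s.SOppSide x y) (f : P →ᵃ[ℝ] ℝ)
    (hf : ∀ p, f p = 0 ↔ p ∈ s) : f x * f y < 0 := by
  have hx : f x ≠ 0 := fun h0 => h.left_notMem ((hf x).1 h0)
  have hy : f y ≠ 0 := fun h0 => h.right_notMem ((hf y).1 h0)
  obtain ⟨p, hp, hxpy⟩ := h.exists_sbtw
  obtain ⟨t, ⟨ht0, ht1⟩, hline⟩ := hxpy.wbtw.map f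
  rw [AffineMap.lineMap_apply_ring', (hf p).2 hp] at hline
  have hprod : f x * f y = -(t * f y ^ 2) - (1 - t) * f x ^ 2 := by
    linear_combination (f x + f y) * hline
  refine lt_of_le_of_ne ?_ (mul_ne_zero hx hy)
  rw [hprod]
  nlinarith [mul_nonneg ht0 (sq_nonneg (f y)), mul_nonneg (sub_nonneg.2 ht1) (sq_nonneg (f x))]

local notation "ℝ²" => EuclideanSpace ℝ (Fin 2)

namespace EuclideanSpace

lemma inner_fin_two (x y : ℝ²) : ⟪x, y⟫_ℝ = x 0 * y 0 + x 1 * y 1 := by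
  simp [PiLp.inner_apply, Fin.sum_univ_two, mul_comm]

lemma dist_sq_fin_two (x y : ℝ²) : dist x y ^ 2 = (x 0 - y 0) ^ 2 + (x 1 - y 1) ^ 2 := by
  rw [EuclideanSpace.dist_eq, sq_sqrt (by positivity)]
  simp [Fin.sum_univ_two, Real.dist_eq, sq_abs]

def cross : ℝ² →ₗ[ℝ] ℝ² →ₗ[ℝ] ℝ :=
  LinearMap.mk₂ ℝ (fun x y => x 0 * y 1 - x 1 * y 0)
    (fun _ _ _ => by simp only [PiLp.add_apply]; ring)
    (fun _ _ _ => by simp only [PiLp.smul_apply, smul_eq_mul]; ring)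
    (fun _ _ _ => by simp only [PiLp.add_apply]; ring)
    (fun _ _ _ => by simp only [PiLp.smul_apply, smul_eq_mul]; ring)

lemma cross_apply (x y : ℝ²) : cross x y = x 0 * y 1 - x 1 * y 0 := rfl

lemma cross_eq_zero_iff {v w : ℝ²} (hv : v ≠ 0) : cross v w = 0 ↔ w ∈ ℝ ∙ v := by
  rw [Submodule.mem_span_singleton]
  constructor
  · intro h
    have hv2 : v 0 ^ 2 + v 1 ^ 2 ≠ 0 := by
      have hnorm : ‖v‖ ^ 2 = v 0 ^ 2 + v 1 ^ 2 := by
        rw [← real_inner_self_eq_norm_sq, inner_fin_two]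
        ring
      exact hnorm ▸ pow_ne_zero 2 (norm_ne_zero_iff.2 hv)
    refine ⟨(v 0 * w 0 + v 1 * w 1) / (v 0 ^ 2 + v 1 ^ 2), ?_⟩
    rw [cross_apply] at h
    ext i
    fin_cases i <;> simp only [Fin.zero_eta, Fin.mk_one, PiLp.smul_apply, smul_eq_mul] <;>
      field_simp
    · linear_combination v 1 * h
    · linear_combination -v 0 * h
  · rintro ⟨t, rfl⟩
    rw [map_smul, cross_apply]
    ring

lemma sin_angle_mul_norm_mul_norm_eq_abs_cross (x y : ℝ²) :
    sin (InnerProductGeometry.angle x y) * (‖x‖ * ‖y‖) = |cross x y| := by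
  rw [InnerProductGeometry.sin_angle_mul_norm_mul_norm, ← sqrt_sq_eq_abs]
  congr 1
  simp only [inner_fin_two, cross_apply]
  ring

lemma sin_angle_add_angle_mul_norm_mul_norm (u v u' v' : ℝ²) :
    sin (InnerProductGeometry.angle u v + InnerProductGeometry.angle u' v') *
        (‖u‖ * ‖v‖ * (‖u'‖ * ‖v'‖)) =
      |cross u v| * ⟪u', v'⟫_ℝ + ⟪u, v⟫_ℝ * |cross u' v'| := by
  rw [← sin_angle_mul_norm_mul_norm_eq_abs_cross, ← sin_angle_mul_norm_mul_norm_eq_abs_cross,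
    ← InnerProductGeometry.cos_angle_mul_norm_mul_norm,
    ← InnerProductGeometry.cos_angle_mul_norm_mul_norm, sin_add]
  ring

def lineSide (B C : ℝ²) : ℝ² →ᵃ[ℝ] ℝ where
  toFun P := cross (B - P) (C - P)
  linear := cross (C - B)
  map_vadd' P v := by
    simp only [vadd_eq_add, cross_apply, PiLp.sub_apply, PiLp.add_apply]
    ring

lemma lineSide_apply (B C P : ℝ²) : lineSide B C P = cross (B - P) (C - P) := rfl

lemma lineSide_eq_zero_iff {B C : ℝ²} (hBC : B ≠ C) (P : ℝ²) :
    lineSide B C P = 0 ↔ P ∈ line[ℝ, B, C] := by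
  have h : lineSide B C P = cross (C - B) (P - B) := by
    simp only [lineSide_apply, cross_apply, PiLp.sub_apply]
    ring
  rw [h, cross_eq_zero_iff (sub_ne_zero.2 hBC.symm), ← vsub_eq_sub, ← vsub_eq_sub,
    ← vectorSpan_pair_rev, ← direction_affineSpan,
    AffineSubspace.vsub_right_mem_direction_iff_mem (left_mem_affineSpan_pair ℝ B C)]

/-- A quantitative inscribed angle theorem: up to the positive factor `|BA| |CA| |BD| |CD|`, the
left-hand side is the sine of the difference of the oriented angles `∡BDC` and `∡BAC`. -/
lemma inner_mul_cross_sub_inner_mul_cross_eq_cross_mul_power {s : Sphere ℝ²} {B C D : ℝ²}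
    (hB : B ∈ s) (hC : C ∈ s) (hD : D ∈ s) (A : ℝ²) :
    ⟪B - A, C - A⟫_ℝ * cross (B - D) (C - D) - ⟪B - D, C - D⟫_ℝ * cross (B - A) (C - A) =
      cross (B - D) (C - D) * s.power A := by
  have hsq : ∀ {X : ℝ²}, X ∈ s → dist X s.center ^ 2 = s.radius ^ 2 := fun hX => by
    rw [mem_sphere.1 hX]
  linear_combination (norm := skip)
    -cross (C - A) (D - A) * hsq hB + cross (B - A) (D - A) * hsq hC -
      cross (B - A) (C - A) * hsq hD
  simp only [Sphere.power, dist_sq_fin_two, inner_fin_two, cross_apply, PiLp.sub_apply]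
  ring

end EuclideanSpace

open EuclideanSpace

theorem inside_circumcircle_angle_sum_gt_pi
    (A B C D O : EuclideanSpace ℝ (Fin 2)) (r : ℝ)
    (hncol : ¬ Collinear ℝ ({B, C, D} : Set (EuclideanSpace ℝ (Fin 2))))
    (hB : dist B O = r) (hC : dist C O = r) (hD : dist D O = r)
    (hside : (affineSpan ℝ ({B, C} : Set (EuclideanSpace ℝ (Fin 2)))).SOppSide A D)
    (hin : dist A O < r) :
    ∠ B A C + ∠ B D C > π := by
  have hBC : B ≠ C := by
    rintro rfl
    exact hncol (by simpa using collinear_pair ℝ B D)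
  let s : Sphere ℝ² := ⟨O, r⟩
  have hpow : s.power A < 0 :=
    (Sphere.power_neg_iff_dist_center_lt_radius (show (0 : ℝ) ≤ r from hB ▸ dist_nonneg)).2 hin
  have hsides : cross (B - A) (C - A) * cross (B - D) (C - D) < 0 :=
    hside.apply_mul_apply_neg (lineSide B C) (lineSide_eq_zero_iff hBC)
  have hkey := inner_mul_cross_sub_inner_mul_cross_eq_cross_mul_power (s := s) hB hC hD A
  have hsum : |cross (B - A) (C - A)| * ⟪B - D, C - D⟫_ℝ
      + ⟪B - A, C - A⟫_ℝ * |cross (B - D) (C - D)| < 0 := by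
    rcases mul_neg_iff.1 hsides with ⟨hA', hD'⟩ | ⟨hA', hD'⟩
    · rw [abs_of_pos hA', abs_of_neg hD']
      linarith [mul_pos_of_neg_of_neg hD' hpow]
    · rw [abs_of_neg hA', abs_of_pos hD']
      linarith [mul_neg_of_pos_of_neg hD' hpow]
  have hsin : sin (∠ B A C + ∠ B D C) < 0 :=
    neg_of_mul_neg_left (sin_angle_add_angle_mul_norm_mul_norm .. ▸ hsum) (by positivity)
  by_contra! hle
  exact hsin.not_ge
    (sin_nonneg_of_nonneg_of_le_pi (add_nonneg (angle_nonneg ..) (angle_nonneg ..)) hle)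
end

section
/- Let B, C, D be three non-collinear points of the Euclidean plane ℝ², let O be the circumcenter and r the circumradius of triangle BCD. Let A be a point such that A and D lie strictly on opposite sides of the line through B and C. If dist(A, O) > r (A is strictly outside the circumcircle of BCD), then ∠BAC + ∠BDC < π, where ∠BAC denotes the undirected angle at A between rays AB and AC, valued in [0, π], and similarly for ∠BDC. -/
/-!
In an oriented plane with area form `ω`, put `p_X = ⟪B - X, C - X⟫` and `a_X = ω (B - X) (C - X)`:
these are `|XB| |XC|` times `cos ∠BXC` and `± sin ∠BXC`. Hence `|a_A| p_D + p_A |a_D|` is a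
nonnegative multiple of `sin (∠BAC + ∠BDC)`, and its positivity forces the angle sum below `π`.
Expanding around the circumcentre gives the power-of-a-point identity
`|BC|² p_X = |BC|² pow(X) + 2 k a_X` with `k` independent of `X`. Since `a_A` and `a_D` have
opposite signs, the `k`-terms cancel in `|a_A| p_D + p_A |a_D|`, leaving `|BC|² pow(A) |a_D| > 0`.
-/

open Real EuclideanGeometry

theorem Real.lt_pi_of_sin_pos {x : ℝ} (hx : x ≤ 2 * π) (hsin : 0 < sin x) : x < π := by
  by_contra! hπx
  have := sin_nonpos_of_nonpos_of_neg_pi_le (x := x - 2 * π) (by linarith) (by linarith)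
  rw [sin_sub_two_pi] at this
  linarith

theorem abs_mul_add_mul_abs_eq_zero_of_mul_nonpos {α : Type*} [CommRing α] [LinearOrder α]
    [IsStrictOrderedRing α] {a b : α} (h : a * b ≤ 0) : |a| * b + a * |b| = 0 := by
  rcases le_total 0 a with ha | ha <;> rcases le_total 0 b with hb | hb <;>
    simp only [abs_of_nonneg, abs_of_nonpos, *] <;> nlinarith

theorem AffineSubspace.WOppSide.map_vsub_mul_map_vsub_nonpos {R V P : Type*} [Field R]
    [LinearOrder R] [IsStrictOrderedRing R] [AddCommGroup V] [Module R V] [AddTorsor V P]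
    {s : AffineSubspace R P} {f : V →ₗ[R] R} (hf : ∀ v ∈ s.direction, f v = 0) {p x y : P}
    (hp : p ∈ s) (h : s.WOppSide x y) : f (x -ᵥ p) * f (y -ᵥ p) ≤ 0 := by
  rcases (wOppSide_iff_exists_left hp).1 h with hx | ⟨q, hq, hray⟩
  · simp [hf _ (AffineSubspace.vsub_mem_direction hx hp)]
  · obtain ⟨w, a, b, ha, hb, -, hxw, hqy⟩ := (hray.map f).exists_eq_smul
    have hfq : f (q -ᵥ y) = -f (y -ᵥ p) := by
      rw [← vsub_sub_vsub_cancel_right q y p, map_sub,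
        hf _ (AffineSubspace.vsub_mem_direction hq hp), zero_sub]
    rw [hfq, smul_eq_mul, neg_eq_iff_eq_neg] at hqy
    rw [hxw, hqy, smul_eq_mul]
    nlinarith [mul_nonneg (mul_nonneg ha hb) (sq_nonneg w)]

namespace Orientation

variable {V P : Type*} [NormedAddCommGroup V] [InnerProductSpace ℝ V] [MetricSpace P]
  [NormedAddTorsor V P] [Fact (Module.finrank ℝ V = 2)] (o : Orientation ℝ V (Fin 2))

local notation "ω" => o.areaForm

theorem sin_angle_mul_norm_mul_norm_eq_abs_areaForm (x y : V) :
    Real.sin (InnerProductGeometry.angle x y) * (‖x‖ * ‖y‖) = |ω x y| := by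
  rw [InnerProductGeometry.sin_angle_mul_norm_mul_norm, real_inner_self_eq_norm_sq,
    real_inner_self_eq_norm_sq, ← o.inner_sq_add_areaForm_sq, ← sq, add_sub_cancel_left,
    sqrt_sq_eq_abs]

theorem angle_add_angle_lt_pi_of_pos {x₁ y₁ x₂ y₂ : V}
    (h : 0 < |ω x₁ y₁| * inner ℝ x₂ y₂ + inner ℝ x₁ y₁ * |ω x₂ y₂|) :
    InnerProductGeometry.angle x₁ y₁ + InnerProductGeometry.angle x₂ y₂ < π := by
  have hsin : Real.sin (InnerProductGeometry.angle x₁ y₁ + InnerProductGeometry.angle x₂ y₂) *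
      ((‖x₁‖ * ‖y₁‖) * (‖x₂‖ * ‖y₂‖)) =
        |ω x₁ y₁| * inner ℝ x₂ y₂ + inner ℝ x₁ y₁ * |ω x₂ y₂| := by
    rw [← o.sin_angle_mul_norm_mul_norm_eq_abs_areaForm,
      ← o.sin_angle_mul_norm_mul_norm_eq_abs_areaForm,
      ← InnerProductGeometry.cos_angle_mul_norm_mul_norm,
      ← InnerProductGeometry.cos_angle_mul_norm_mul_norm, Real.sin_add]
    ring
  refine Real.lt_pi_of_sin_pos ?_ (pos_of_mul_pos_left (hsin ▸ h) (by positivity))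
  linarith [InnerProductGeometry.angle_le_pi x₁ y₁, InnerProductGeometry.angle_le_pi x₂ y₂]

theorem areaForm_vsub_vsub_eq (B C X : P) :
    ω (B -ᵥ X) (C -ᵥ X) = ω (C -ᵥ B) (X -ᵥ B) := by
  rw [← vsub_add_vsub_cancel C B X, ← neg_vsub_eq_vsub_rev X B, map_add, o.areaForm_apply_self,
    add_zero, map_neg, LinearMap.neg_apply, o.areaForm_swap, neg_neg]

theorem areaForm_vsub_vsub_ne_zero_of_not_collinear {p₁ p₂ p₃ : P}
    (h : ¬Collinear ℝ {p₁, p₂, p₃}) : ω (p₁ -ᵥ p₂) (p₃ -ᵥ p₂) ≠ 0 := by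
  rw [← abs_pos, ← o.sin_angle_mul_norm_mul_norm_eq_abs_areaForm]
  have h₁₂ := ne₁₂_of_not_collinear h
  have h₃₂ := (ne₂₃_of_not_collinear h).symm
  exact mul_pos (sin_pos_of_not_collinear h) (mul_pos (by simpa using h₁₂) (by simpa using h₃₂))

theorem norm_sq_mul_inner_vsub_vsub_eq {s : Sphere P} {B C : P} (hB : B ∈ s) (hC : C ∈ s)
    (X : P) :
    ‖C -ᵥ B‖ ^ 2 * inner ℝ (B -ᵥ X) (C -ᵥ X) =
      ‖C -ᵥ B‖ ^ 2 * s.power X + 2 * ω (C -ᵥ B) (s.center -ᵥ B) * ω (B -ᵥ X) (C -ᵥ X) := by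
  have hBc : ‖s.center -ᵥ B‖ = s.radius := by rw [← dist_eq_norm_vsub', mem_sphere.1 hB]
  have hCc : ‖(C -ᵥ B) - (s.center -ᵥ B)‖ = s.radius := by
    rw [vsub_sub_vsub_cancel_right, ← dist_eq_norm_vsub, mem_sphere.1 hC]
  have hXc : dist X s.center = ‖(X -ᵥ B) - (s.center -ᵥ B)‖ := by
    rw [vsub_sub_vsub_cancel_right, dist_eq_norm_vsub]
  rw [o.areaForm_vsub_vsub_eq B C X, Sphere.power, hXc, ← hBc,
    ← vsub_sub_vsub_cancel_right C X B, ← neg_vsub_eq_vsub_rev X B]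
  rw [← hBc] at hCc
  have hLagrange := o.inner_mul_inner_add_areaForm_mul_areaForm (C -ᵥ B) (X -ᵥ B) (s.center -ᵥ B)
  generalize C -ᵥ B = u, X -ᵥ B = a, s.center -ᵥ B = c at *
  have hchord : ‖u‖ ^ 2 = 2 * inner ℝ u c := by
    have := congrArg (· ^ 2) hCc
    simp only [norm_sub_sq_real] at this
    linarith
  rw [norm_sub_sq_real, inner_neg_left, inner_sub_right, real_inner_self_eq_norm_sq]
  rw [real_inner_comm a u] at hLagrange
  linear_combination (-2) * hLagrange - inner ℝ a u * hchord

theorem angle_add_angle_lt_pi_of_power_pos {s : Sphere P} {A B C D : P} (hB : B ∈ s)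
    (hC : C ∈ s) (hD : D ∈ s) (hA : 0 < s.power A) (hAD : line[ℝ, B, C].WOppSide A D)
    (hωD : ω (B -ᵥ D) (C -ᵥ D) ≠ 0) : ∠ B A C + ∠ B D C < π := by
  have hBC : C -ᵥ B ≠ 0 := by
    rw [vsub_ne_zero]
    rintro rfl
    exact hωD (o.areaForm_apply_self _)
  have hopp : ω (B -ᵥ A) (C -ᵥ A) * ω (B -ᵥ D) (C -ᵥ D) ≤ 0 := by
    rw [o.areaForm_vsub_vsub_eq B C A, o.areaForm_vsub_vsub_eq B C D]
    refine hAD.map_vsub_mul_map_vsub_nonpos (fun v hv ↦ ?_) (left_mem_affineSpan_pair ℝ B C)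
    rw [direction_affineSpan, mem_vectorSpan_pair_rev] at hv
    obtain ⟨t, rfl⟩ := hv
    rw [map_smul, o.areaForm_apply_self, smul_zero]
  have hpowD : s.power D = 0 := by rw [Sphere.power, mem_sphere.1 hD, sub_self]
  have hidA := o.norm_sq_mul_inner_vsub_vsub_eq hB hC A
  have hidD := o.norm_sq_mul_inner_vsub_vsub_eq hB hC D
  rw [hpowD, mul_zero, zero_add] at hidD
  apply o.angle_add_angle_lt_pi_of_pos
  refine pos_of_mul_pos_right (a := ‖C -ᵥ B‖ ^ 2) ?_ (sq_nonneg _)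
  calc 0 < ‖C -ᵥ B‖ ^ 2 * s.power A * |ω (B -ᵥ D) (C -ᵥ D)| := by positivity
    _ = _ := by
      linear_combination -|ω (B -ᵥ A) (C -ᵥ A)| * hidD - |ω (B -ᵥ D) (C -ᵥ D)| * hidA
        - 2 * ω (C -ᵥ B) (s.center -ᵥ B) * abs_mul_add_mul_abs_eq_zero_of_mul_nonpos hopp

end Orientation

theorem outside_circumcircle_angle_sum_lt_pi
    (A B C D O : EuclideanSpace ℝ (Fin 2)) (r : ℝ)
    (hncol : ¬ Collinear ℝ ({B, C, D} : Set (EuclideanSpace ℝ (Fin 2))))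
    (hB : dist B O = r) (hC : dist C O = r) (hD : dist D O = r)
    (hside : (affineSpan ℝ ({B, C} : Set (EuclideanSpace ℝ (Fin 2)))).SOppSide A D)
    (hout : dist A O > r) :
    ∠ B A C + ∠ B D C < π := by
  have : Fact (Module.finrank ℝ (EuclideanSpace ℝ (Fin 2)) = 2) := ⟨finrank_euclideanSpace_fin⟩
  let o : Orientation ℝ (EuclideanSpace ℝ (Fin 2)) (Fin 2) :=
    (EuclideanSpace.basisFun (Fin 2) ℝ).toBasis.orientation
  have hBDC : ¬Collinear ℝ {B, D, C} := by rwa [Set.pair_comm]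
  have hA : 0 < (⟨O, r⟩ : Sphere _).power A :=
    (Sphere.power_pos_iff_radius_lt_dist_center (hB ▸ dist_nonneg)).2 hout
  exact o.angle_add_angle_lt_pi_of_power_pos (s := ⟨O, r⟩) (mem_sphere.2 hB) (mem_sphere.2 hC)
    (mem_sphere.2 hD) hA hside.wOppSide (o.areaForm_vsub_vsub_ne_zero_of_not_collinear hBDC)
end

section
/- Let S be a finite set of points in the plane ℝ² and let q ∈ ℝ² be a point that is strictly greater than every point of S in the lexicographic order on coordinates (i.e., for every p ∈ S, either p.x < q.x, or p.x = q.x and p.y < q.y). Then q does not belong to the convex hull of S. -/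
theorem lex_max_not_mem_convexHull
    (S : Finset (EuclideanSpace ℝ (Fin 2))) (q : EuclideanSpace ℝ (Fin 2))
    (hlex : ∀ p ∈ S, p 0 < q 0 ∨ (p 0 = q 0 ∧ p 1 < q 1)) :
    q ∉ convexHull ℝ (S : Set (EuclideanSpace ℝ (Fin 2))) := by
  intro hq
  rw [Finset.convexHull_eq] at hq
  obtain ⟨w, hw0, hw1, hcm⟩ := hq
  rw [Finset.centerMass_eq_of_sum_1 _ _ hw1] at hcm
  have hcoord : ∀ j : Fin 2, ∑ p ∈ S, w p * p j = q j := by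
    intro j
    have h := congrArg (EuclideanSpace.proj (𝕜 := ℝ) j) hcm
    simpa [map_sum, smul_eq_mul] using h
  -- coordinate 0: each term w p * p 0 ≤ w p * q 0
  have hle0 : ∀ p ∈ S, w p * p 0 ≤ w p * q 0 := by
    intro p hp
    apply mul_le_mul_of_nonneg_left _ (hw0 p hp)
    rcases hlex p hp with h | h
    · exact h.le
    · exact h.1.le
  have hsum0 : ∑ p ∈ S, w p * q 0 = q 0 := by
    rw [← Finset.sum_mul, hw1, one_mul]
  -- every p with positive weight has p 0 = q 0
  have hkey : ∀ p ∈ S, 0 < w p → p 0 = q 0 := by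
    intro p hp hwp
    by_contra hne
    have hlt : w p * p 0 < w p * q 0 := by
      apply mul_lt_mul_of_pos_left _ hwp
      rcases hlex p hp with h | h
      · exact h
      · exact absurd h.1 hne
    have : ∑ p ∈ S, w p * p 0 < ∑ p ∈ S, w p * q 0 :=
      Finset.sum_lt_sum hle0 ⟨p, hp, hlt⟩
    rw [hcoord 0, hsum0] at this
    exact lt_irrefl _ this
  -- coordinate 1
  obtain ⟨p₀, hp₀, hwp₀⟩ : ∃ p ∈ S, 0 < w p := by
    by_contra h
    push_neg at h
    have : ∑ p ∈ S, w p = 0 :=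
      Finset.sum_eq_zero fun p hp => le_antisymm (h p hp) (hw0 p hp)
    rw [hw1] at this; norm_num at this
  have hle1 : ∀ p ∈ S, w p * p 1 ≤ w p * q 1 := by
    intro p hp
    rcases eq_or_lt_of_le (hw0 p hp) with h | h
    · rw [← h]; simp
    · apply mul_le_mul_of_nonneg_left _ (hw0 p hp)
      rcases hlex p hp with hc | hc
      · exact absurd (hkey p hp h) (ne_of_lt hc)
      · exact hc.2.le
  have hlt1 : w p₀ * p₀ 1 < w p₀ * q 1 := by
    apply mul_lt_mul_of_pos_left _ hwp₀
    rcases hlex p₀ hp₀ with hc | hc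
    · exact absurd (hkey p₀ hp₀ hwp₀) (ne_of_lt hc)
    · exact hc.2
  have : ∑ p ∈ S, w p * p 1 < ∑ p ∈ S, w p * q 1 :=
    Finset.sum_lt_sum hle1 ⟨p₀, hp₀, hlt1⟩
  rw [hcoord 1, ← Finset.sum_mul, hw1, one_mul] at this
  exact lt_irrefl _ this
end
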